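/- If a signed directed graph G is strongly connected and has no negative cycle, then G is sign-definite, i.e., there cannot be two arcs of different signs between the same ordered pair of distinct vertices. The same conclusion holds if G is strongly connected and has no positive cycle. -/

import Mathlib

/-- Signed directed walks: `SWalk pos neg u v s n` means there is a directed walk of
length `n` from `u` to `v` whose parity of negative arcs is `s` (`true` = odd). -/
inductive SWalk {V : Type*} (pos neg : V → V → Prop) : V → V → Bool → ℕ → Prop where
  | nil (u : V) : SWalk pos neg u u false 0
  | consPos {u v w : V} {s : Bool} {n : ℕ} :
      pos u v → SWalk pos neg v w s n → SWalk pos neg u w s (n + 1)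
  | consNeg {u v w : V} {s : Bool} {n : ℕ} :
      neg u v → SWalk pos neg v w s n → SWalk pos neg u w (!s) (n + 1)

namespace SWalk

variable {V : Type*} {pos neg : V → V → Prop}

theorem cons_of_parallel_arcs {u v : V} {s : Bool} {n : ℕ} (hp : pos u v) (hn : neg u v)
    (hw : SWalk pos neg v u s n) (t : Bool) : SWalk pos neg u u t (n + 1) := by
  cases s <;> cases t
  · exact consPos hp hw
  · exact consNeg hn hw
  · exact consNeg hn hw
  · exact consPos hp hw

theorem exists_closed_of_parallel_arcs
    (hconn : ∀ u v : V, ∃ (s : Bool) (n : ℕ), SWalk pos neg u v s n)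
    {u v : V} (hp : pos u v) (hn : neg u v) (t : Bool) :
    ∃ n : ℕ, SWalk pos neg u u t (n + 1) :=
  let ⟨_, n, hw⟩ := hconn v u
  ⟨n, hw.cons_of_parallel_arcs hp hn t⟩

end SWalk

/-- a strongly connected signed directed graph with no negative cycle
(or with no positive cycle) is sign-definite. -/
theorem stmt3 {V : Type*} (pos neg : V → V → Prop)
    (hconn : ∀ u v : V, ∃ (s : Bool) (n : ℕ), SWalk pos neg u v s n) :
    ((∀ (u : V) (n : ℕ), ¬ SWalk pos neg u u true n) →
        ∀ u v : V, u ≠ v → ¬ (pos u v ∧ neg u v)) ∧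
    ((∀ (u : V) (n : ℕ), n ≠ 0 → ¬ SWalk pos neg u u false n) →
        ∀ u v : V, u ≠ v → ¬ (pos u v ∧ neg u v)) := by
  constructor
  · rintro hno u v - ⟨hp, hn⟩
    obtain ⟨n, hcycle⟩ := SWalk.exists_closed_of_parallel_arcs hconn hp hn true
    exact hno u _ hcycle
  · rintro hno u v - ⟨hp, hn⟩
    obtain ⟨n, hcycle⟩ := SWalk.exists_closed_of_parallel_arcs hconn hp hn false
    exact hno u _ n.succ_ne_zero hcycle
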